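/- Let 𝒯 be a tree ensemble on ℝ^p, let (z^L,z^R) be a region, and let j be a feature and l a level with z^L_j ≤ l < z^R_j. Then max{Φ(z^L,z^R_{jl}), Φ(z^L_{jl},z^R)} ≤ Φ(z^L,z^R) ≤ 𝟙_{jl}(z^L,z^R) + max{Φ(z^L,z^R_{jl}), Φ(z^L_{jl},z^R)}. -/

import Mathlib

/-- A decision tree on `ℝ^p`: either a leaf labeled with a class `c : ℕ`,
or an internal node splitting on feature `j` with threshold `t`. -/
inductive DTree (p : ℕ) : Type where
  | leaf (c : ℕ) : DTree p
  | node (j : Fin p) (t : ℝ) (L R : DTree p) : DTree p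

namespace DTree

/-- Evaluation of a decision tree at a point `x : ℝ^p`. -/
noncomputable def eval {p : ℕ} : DTree p → (Fin p → ℝ) → ℕ
  | leaf c, _ => c
  | node j t L R, x => if x j ≤ t then L.eval x else R.eval x

/-- Depth `Φ(T)` of a decision tree. -/
def depth {p : ℕ} : DTree p → ℕ
  | leaf _ => 0
  | node _ _ L R => 1 + max L.depth R.depth

/-- Number of leaves `L(T)` of a decision tree. -/
def leaves {p : ℕ} : DTree p → ℕ
  | leaf _ => 1
  | node _ _ L R => L.leaves + R.leaves

/-- The set of splits `(j, t)` occurring at internal nodes of a tree. -/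
def splits {p : ℕ} : DTree p → Set (Fin p × ℝ)
  | leaf _ => ∅
  | node j t L R => insert (j, t) (L.splits ∪ R.splits)

end DTree

/-- A tree ensemble: a finite nonempty family of decision trees with positive weights. -/
structure Ensemble (p : ℕ) : Type where
  m : ℕ
  m_pos : 0 < m
  tree : Fin m → DTree p
  weight : Fin m → ℝ
  weight_pos : ∀ i, 0 < weight i

namespace Ensemble

/-- Total weight of the trees voting for class `c` at point `x`. -/
noncomputable def score {p : ℕ} (E : Ensemble p) (x : Fin p → ℝ) (c : ℕ) : ℝ :=
  ∑ i ∈ Finset.univ.filter (fun i => (E.tree i).eval x = c), E.weight i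

/-- The decision function of the ensemble: the smallest class maximizing the weighted vote. -/
noncomputable def F {p : ℕ} (E : Ensemble p) (x : Fin p → ℝ) : ℕ :=
  sInf {c : ℕ | ∀ c' : ℕ, E.score x c' ≤ E.score x c}

/-- The set `H j` of thresholds appearing in splits on feature `j` in trees of the ensemble. -/
def H {p : ℕ} (E : Ensemble p) (j : Fin p) : Set ℝ :=
  {t : ℝ | ∃ i, (j, t) ∈ (E.tree i).splits}

end Ensemble

/-- `T` is faithful to the ensemble `E` on the set `S`. -/
def Faithful {p : ℕ} (T : DTree p) (E : Ensemble p) (S : Set (Fin p → ℝ)) : Prop :=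
  ∀ x ∈ S, T.eval x = E.F x
/-- A cell: for each feature `j`, an index in `{0, …, n j}` (0-indexed version of `{1, …, |H_j|+1}`). -/
abbrev Cell {p : ℕ} (n : Fin p → ℕ) : Type := ∀ j, Fin (n j + 1)

/-- The open box `B(z)` associated with a cell `z`, given for each feature `j` the
increasing enumeration `h j : Fin (n j) → ℝ` of the thresholds: `x j` lies strictly above
every threshold of index `< z j` and strictly below every threshold of index `≥ z j`. -/
def Box {p : ℕ} (n : Fin p → ℕ) (h : ∀ j, Fin (n j) → ℝ) (z : Cell n) : Set (Fin p → ℝ) :=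
  {x | ∀ j, (∀ k : Fin (n j), (k : ℕ) < (z j : ℕ) → h j k < x j) ∧
            (∀ k : Fin (n j), (z j : ℕ) ≤ (k : ℕ) → x j < h j k)}

/-- The cell `z` is enclosed in the region `(zL, zR)`. -/
def Encl {p : ℕ} {n : Fin p → ℕ} (zL zR z : Cell n) : Prop :=
  ∀ j, (zL j : ℕ) ≤ (z j : ℕ) ∧ (z j : ℕ) ≤ (zR j : ℕ)

/-- The subset of `ℝ^p` covered by the region `(zL, zR)`: the union of the boxes of the
cells it encloses. -/
def RegionSet {p : ℕ} (n : Fin p → ℕ) (h : ∀ j, Fin (n j) → ℝ) (zL zR : Cell n) :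
    Set (Fin p → ℝ) :=
  ⋃ z ∈ {z : Cell n | Encl zL zR z}, Box n h z

/-- `Φ(zL, zR)`: the minimum depth of a decision tree faithful to `E` on the region `(zL, zR)`. -/
noncomputable def Phi {p : ℕ} (E : Ensemble p) (n : Fin p → ℕ) (h : ∀ j, Fin (n j) → ℝ)
    (zL zR : Cell n) : ℕ :=
  sInf {d : ℕ | ∃ T : DTree p, Faithful T E (RegionSet n h zL zR) ∧ T.depth = d}

/-- `Λ(zL, zR)`: the minimum number of leaves of a decision tree faithful to `E` on `(zL, zR)`. -/
noncomputable def Lam {p : ℕ} (E : Ensemble p) (n : Fin p → ℕ) (h : ∀ j, Fin (n j) → ℝ)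
    (zL zR : Cell n) : ℕ :=
  sInf {d : ℕ | ∃ T : DTree p, Faithful T E (RegionSet n h zL zR) ∧ T.leaves = d}

/-- `z^R_{jl}`: replace the `j`-th coordinate of `zR` by `l`. -/
def splitR {p : ℕ} {n : Fin p → ℕ} (zR : Cell n) (j : Fin p) (l : Fin (n j)) : Cell n :=
  Function.update zR j l.castSucc

/-- `z^L_{jl}`: replace the `j`-th coordinate of `zL` by `l + 1`. -/
def splitL {p : ℕ} {n : Fin p → ℕ} (zL : Cell n) (j : Fin p) (l : Fin (n j)) : Cell n :=
  Function.update zL j l.succ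

/-- The cells `z` and `z'` have the same (weighted majority) class under `E`. -/
def SameClass {p : ℕ} (E : Ensemble p) (n : Fin p → ℕ) (h : ∀ j, Fin (n j) → ℝ)
    (z z' : Cell n) : Prop :=
  ∀ x ∈ Box n h z, ∀ y ∈ Box n h z', E.F x = E.F y

open Classical in
/-- The indicator `𝟙_{jl}(z^L, z^R)`. -/
noncomputable def ind {p : ℕ} (E : Ensemble p) (n : Fin p → ℕ) (h : ∀ j, Fin (n j) → ℝ)
    (zL zR : Cell n) (j : Fin p) (l : Fin (n j)) : ℕ :=
  if Phi E n h zL (splitR zR j l) = 0 ∧ Phi E n h (splitL zL j l) zR = 0 ∧ SameClass E n h zL zR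
  then 0 else 1

/-!
The minimum depth of a faithful tree is monotone under inclusion of the set to be classified,
since a tree faithful on a set is faithful on its subsets; this needs some faithful tree to exist,
and one does because grafting the trees of the ensemble below one another's leaves gives a single
tree computing `E.F`. The two halves lie in the region, which gives the lower bound, and they
cover it. Optimal trees for the halves, hung below a root split on feature `j` at the threshold
`h j l`, form a faithful tree for the region. If moreover both halves are solved by single leaves
and the corner cells `zL`, `zR` have the same class, the two leaves carry the same label and one
leaf suffices; here the corner boxes must be nonempty, which holds because the thresholds
increase strictly.
-/

namespace DTree

variable {p : ℕ}

def bind : DTree p → (ℕ → DTree p) → DTree p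
  | leaf c, k => k c
  | node j t L R, k => node j t (L.bind k) (R.bind k)

theorem eval_bind (T : DTree p) (k : ℕ → DTree p) (x : Fin p → ℝ) :
    (T.bind k).eval x = (k (T.eval x)).eval x := by
  induction T with
  | leaf c => rfl
  | node j t L R ihL ihR => simp only [bind, eval]; split_ifs <;> assumption

def combine : (m : ℕ) → (Fin m → DTree p) → ((Fin m → ℕ) → ℕ) → DTree p
  | 0, _, g => leaf (g finZeroElim)
  | m + 1, T, g => (T 0).bind fun c => combine m (Fin.tail T) fun v => g (Fin.cons c v)

theorem eval_combine (m : ℕ) (T : Fin m → DTree p) (g : (Fin m → ℕ) → ℕ) (x : Fin p → ℝ) :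
    (combine m T g).eval x = g fun i => (T i).eval x := by
  induction m with
  | zero => exact congrArg g (funext finZeroElim)
  | succ m ih =>
    rw [combine, eval_bind, ih]
    exact congrArg g (Fin.cons_self_tail fun i => (T i).eval x)

theorem depth_eq_zero_iff {T : DTree p} : T.depth = 0 ↔ ∃ c, T = leaf c := by
  cases T <;> simp [depth]

end DTree

theorem Ensemble.exists_eval_eq_F {p : ℕ} (E : Ensemble p) :
    ∃ T : DTree p, ∀ x, T.eval x = E.F x :=
  -- `E.F x` unfolds to this function of the votes `fun i => (E.tree i).eval x`.
  ⟨DTree.combine E.m E.tree fun v => sInf {c | ∀ c',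
      ∑ i ∈ Finset.univ.filter (v · = c'), E.weight i ≤
        ∑ i ∈ Finset.univ.filter (v · = c), E.weight i},
    fun x => DTree.eval_combine _ _ _ x⟩

section MinDepth

variable {p : ℕ} (E : Ensemble p)

/-- `Phi E n h zL zR` is `minDepth E (RegionSet n h zL zR)` by definition. -/
noncomputable def minDepth (S : Set (Fin p → ℝ)) : ℕ :=
  sInf {d | ∃ T : DTree p, Faithful T E S ∧ T.depth = d}

variable {E}

theorem Faithful.mono {T : DTree p} {S S' : Set (Fin p → ℝ)} (hT : Faithful T E S')
    (hS : S ⊆ S') : Faithful T E S :=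
  fun x hx => hT x (hS hx)

theorem minDepth_le_depth {T : DTree p} {S : Set (Fin p → ℝ)} (hT : Faithful T E S) :
    minDepth E S ≤ T.depth :=
  Nat.sInf_le ⟨T, hT, rfl⟩

theorem exists_faithful_depth_eq_minDepth (S : Set (Fin p → ℝ)) :
    ∃ T : DTree p, Faithful T E S ∧ T.depth = minDepth E S := by
  obtain ⟨T, hT⟩ := E.exists_eval_eq_F
  exact Nat.sInf_mem (s := {d | ∃ T : DTree p, Faithful T E S ∧ T.depth = d})
    ⟨T.depth, T, fun x _ => hT x, rfl⟩

theorem minDepth_mono {S S' : Set (Fin p → ℝ)} (hS : S ⊆ S') : minDepth E S ≤ minDepth E S' := by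
  obtain ⟨T, hT, hdepth⟩ := exists_faithful_depth_eq_minDepth (E := E) S'
  exact hdepth ▸ minDepth_le_depth (hT.mono hS)

theorem minDepth_union_le {A B : Set (Fin p → ℝ)} {j : Fin p} {t : ℝ}
    (hA : ∀ x ∈ A, x j ≤ t) (hB : ∀ x ∈ B, t < x j) :
    minDepth E (A ∪ B) ≤ 1 + max (minDepth E A) (minDepth E B) := by
  obtain ⟨TA, hTA, hdA⟩ := exists_faithful_depth_eq_minDepth (E := E) A
  obtain ⟨TB, hTB, hdB⟩ := exists_faithful_depth_eq_minDepth (E := E) B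
  have hT : Faithful (.node j t TA TB) E (A ∪ B) := by
    rintro x (hx | hx)
    · simp only [DTree.eval, if_pos (hA x hx), hTA x hx]
    · simp only [DTree.eval, if_neg (hB x hx).not_ge, hTB x hx]
  simpa only [DTree.depth, hdA, hdB] using minDepth_le_depth hT

theorem minDepth_union_eq_zero {A B : Set (Fin p → ℝ)} (hA : minDepth E A = 0)
    (hB : minDepth E B = 0) {a b : Fin p → ℝ} (ha : a ∈ A) (hb : b ∈ B) (hab : E.F a = E.F b) :
    minDepth E (A ∪ B) = 0 := by
  obtain ⟨TA, hTA, hdA⟩ := exists_faithful_depth_eq_minDepth (E := E) A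
  obtain ⟨TB, hTB, hdB⟩ := exists_faithful_depth_eq_minDepth (E := E) B
  obtain ⟨cA, rfl⟩ := DTree.depth_eq_zero_iff.mp (hdA.trans hA)
  obtain ⟨cB, rfl⟩ := DTree.depth_eq_zero_iff.mp (hdB.trans hB)
  have hc : cA = cB := (hTA a ha).trans (hab.trans (hTB b hb).symm)
  refine Nat.eq_zero_of_le_zero (minDepth_le_depth (T := .leaf cA) ?_)
  rintro x (hx | hx)
  · exact hTA x hx
  · exact hc ▸ hTB x hx

end MinDepth

section Regions

variable {p : ℕ} {n : Fin p → ℕ} {h : ∀ j, Fin (n j) → ℝ}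

theorem box_nonempty (hmono : ∀ j, StrictMono (h j)) (z : Cell n) : (Box n h z).Nonempty := by
  choose b hb using fun j => Set.Finite.exists_between'
    (Set.toFinite (h j '' {k | (k : ℕ) < z j})) (Set.toFinite (h j '' {k | (z j : ℕ) ≤ k}))
    (by
      rintro _ ⟨k, hk, rfl⟩ _ ⟨k', hk', rfl⟩
      exact hmono j (Fin.lt_def.mpr (lt_of_lt_of_le hk hk')))
  exact ⟨b, fun j => ⟨fun k hk => (hb j).1 _ ⟨k, hk, rfl⟩, fun k hk => (hb j).2 _ ⟨k, hk, rfl⟩⟩⟩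

theorem box_subset_regionSet {zL zR z : Cell n} (hz : Encl zL zR z) :
    Box n h z ⊆ RegionSet n h zL zR :=
  Set.subset_biUnion_of_mem (u := Box n h) hz

theorem mem_regionSet_iff {zL zR : Cell n} {x : Fin p → ℝ} :
    x ∈ RegionSet n h zL zR ↔ ∃ z, Encl zL zR z ∧ x ∈ Box n h z := by
  simp [RegionSet]

variable {zL zR z : Cell n} {j : Fin p} {l : Fin (n j)}

theorem encl_splitR (hz : Encl zL zR z) (hzj : (z j : ℕ) ≤ l) : Encl zL (splitR zR j l) z := by
  intro i
  rcases eq_or_ne i j with rfl | hi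
  · simpa [splitR] using ⟨(hz i).1, hzj⟩
  · simpa [splitR, hi] using hz i

theorem encl_splitL (hz : Encl zL zR z) (hzj : (l : ℕ) < z j) : Encl (splitL zL j l) zR z := by
  intro i
  rcases eq_or_ne i j with rfl | hi
  · simpa [splitL, Nat.succ_le_iff] using ⟨hzj, (hz i).2⟩
  · simpa [splitL, hi] using hz i

theorem encl_of_encl_splitR (hl : (l : ℕ) ≤ zR j) (hz : Encl zL (splitR zR j l) z) :
    Encl zL zR z := by
  intro i
  rcases eq_or_ne i j with rfl | hi
  · have := hz i
    simp only [splitR, Function.update_self, Fin.val_castSucc] at this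
    omega
  · simpa [splitR, hi] using hz i

theorem encl_of_encl_splitL (hl : (zL j : ℕ) ≤ l) (hz : Encl (splitL zL j l) zR z) :
    Encl zL zR z := by
  intro i
  rcases eq_or_ne i j with rfl | hi
  · have := hz i
    simp only [splitL, Function.update_self, Fin.val_succ] at this
    omega
  · simpa [splitL, hi] using hz i

theorem regionSet_splitR_subset (hl : (l : ℕ) ≤ zR j) :
    RegionSet n h zL (splitR zR j l) ⊆ RegionSet n h zL zR :=
  Set.biUnion_subset_biUnion_left fun _ => encl_of_encl_splitR hl

theorem regionSet_splitL_subset (hl : (zL j : ℕ) ≤ l) :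
    RegionSet n h (splitL zL j l) zR ⊆ RegionSet n h zL zR :=
  Set.biUnion_subset_biUnion_left fun _ => encl_of_encl_splitL hl

theorem regionSet_subset_union_split :
    RegionSet n h zL zR ⊆ RegionSet n h zL (splitR zR j l) ∪ RegionSet n h (splitL zL j l) zR := by
  intro x hx
  obtain ⟨z, hz, hxz⟩ := mem_regionSet_iff.mp hx
  rcases le_or_gt (z j : ℕ) l with hzj | hzj
  · exact .inl (box_subset_regionSet (encl_splitR hz hzj) hxz)
  · exact .inr (box_subset_regionSet (encl_splitL hz hzj) hxz)

theorem le_of_mem_regionSet_splitR {x : Fin p → ℝ} (hx : x ∈ RegionSet n h zL (splitR zR j l)) :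
    x j ≤ h j l := by
  obtain ⟨z, hz, hxz⟩ := mem_regionSet_iff.mp hx
  have hzj : (z j : ℕ) ≤ l := by simpa [splitR] using (hz j).2
  exact ((hxz j).2 l hzj).le

theorem lt_of_mem_regionSet_splitL {x : Fin p → ℝ} (hx : x ∈ RegionSet n h (splitL zL j l) zR) :
    h j l < x j := by
  obtain ⟨z, hz, hxz⟩ := mem_regionSet_iff.mp hx
  have hzj : (l : ℕ) < z j := by simpa [splitL, Nat.succ_le_iff] using (hz j).1
  exact (hxz j).1 l hzj

end Regions

theorem phi_split_bounds_general {p : ℕ} (E : Ensemble p) (n : Fin p → ℕ) (h : ∀ j, Fin (n j) → ℝ)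
    (hmono : ∀ j, StrictMono (h j))
    (zL zR : Cell n) (hreg : ∀ j, (zL j : ℕ) ≤ (zR j : ℕ))
    (j : Fin p) (l : Fin (n j)) (hl1 : (zL j : ℕ) ≤ (l : ℕ)) (hl2 : (l : ℕ) < (zR j : ℕ)) :
    max (Phi E n h zL (splitR zR j l)) (Phi E n h (splitL zL j l) zR) ≤ Phi E n h zL zR ∧
    Phi E n h zL zR ≤ ind E n h zL zR j l +
      max (Phi E n h zL (splitR zR j l)) (Phi E n h (splitL zL j l) zR) := by
  refine ⟨max_le (minDepth_mono (regionSet_splitR_subset hl2.le))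
    (minDepth_mono (regionSet_splitL_subset hl1)), ?_⟩
  calc Phi E n h zL zR
      ≤ minDepth E (RegionSet n h zL (splitR zR j l) ∪ RegionSet n h (splitL zL j l) zR) :=
        minDepth_mono regionSet_subset_union_split
    _ ≤ ind E n h zL zR j l +
          max (Phi E n h zL (splitR zR j l)) (Phi E n h (splitL zL j l) zR) := by
      unfold ind
      split_ifs with hind
      · obtain ⟨hleft, hright, hsame⟩ := hind
        obtain ⟨xL, hxL⟩ := box_nonempty hmono zL
        obtain ⟨xR, hxR⟩ := box_nonempty hmono zR
        have hzL : Encl zL (splitR zR j l) zL := encl_splitR (fun i => ⟨le_rfl, hreg i⟩) hl1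
        have hzR : Encl (splitL zL j l) zR zR := encl_splitL (fun i => ⟨hreg i, le_rfl⟩) hl2
        rw [minDepth_union_eq_zero hleft hright (box_subset_regionSet hzL hxL)
          (box_subset_regionSet hzR hxR) (hsame xL hxL xR hxR)]
        exact Nat.zero_le _
      · exact minDepth_union_le (fun _ => le_of_mem_regionSet_splitR)
          (fun _ => lt_of_mem_regionSet_splitL)

/-- For a region `(zL, zR)`, a feature `j` and a level `l` with
`zL j ≤ l < zR j`:
`max{Φ(zL, zR_{jl}), Φ(zL_{jl}, zR)} ≤ Φ(zL, zR) ≤ 𝟙_{jl}(zL, zR) + max{Φ(zL, zR_{jl}), Φ(zL_{jl}, zR)}`. -/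
theorem phi_split_bounds {p : ℕ} (E : Ensemble p) (n : Fin p → ℕ) (h : ∀ j, Fin (n j) → ℝ)
    (hmono : ∀ j, StrictMono (h j)) (hcov : ∀ j, E.H j = Set.range (h j))
    (zL zR : Cell n) (hreg : ∀ j, (zL j : ℕ) ≤ (zR j : ℕ))
    (j : Fin p) (l : Fin (n j)) (hl1 : (zL j : ℕ) ≤ (l : ℕ)) (hl2 : (l : ℕ) < (zR j : ℕ)) :
    max (Phi E n h zL (splitR zR j l)) (Phi E n h (splitL zL j l) zR) ≤ Phi E n h zL zR ∧
    Phi E n h zL zR ≤ ind E n h zL zR j l +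
      max (Phi E n h zL (splitR zR j l)) (Phi E n h (splitL zL j l) zR) :=
  phi_split_bounds_general E n h hmono zL zR hreg j l hl1 hl2
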